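/- If f is a differentiable concave function on an open convex symmetric cone Γ ⊆ ℝⁿ containing the positive orthant, and f satisfies lim_{t→+∞} f(tλ) > f(μ) for all λ, μ ∈ Γ, then f_i(λ) ≥ 0 for every i and ∑_{i=1}^n f_i(λ) > 0 for every λ ∈ Γ. -/
import Mathlib


open Finset Filter Topology

/-- The i-th partial derivative `f_i(x) = ∂f/∂x_i (x)`. -/
noncomputable def pd {n : ℕ} (f : (Fin n → ℝ) → ℝ) (x : Fin n → ℝ) (i : Fin n) : ℝ :=
  fderiv ℝ f x (Pi.single i 1)

/-- The set of values `t_λ = (∑ f_i(λ) λ_i)/(∑ f_j(λ))` over the level set `∂Γ^σ`. -/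
def tset {n : ℕ} (Γ : Set (Fin n → ℝ)) (f : (Fin n → ℝ) → ℝ) (σ : ℝ) : Set ℝ :=
  {t : ℝ | ∃ x ∈ Γ, f x = σ ∧ t = (∑ i, pd f x i * x i) / (∑ i, pd f x i)}

/-- The cone `Γ_{σ,f} = { t (λ - τ 𝟏) : λ ∈ ∂Γ^σ, t > 0 }`. -/
def lcone {n : ℕ} (Γ : Set (Fin n → ℝ)) (f : (Fin n → ℝ) → ℝ) (σ τ : ℝ) :
    Set (Fin n → ℝ) :=
  {y | ∃ x ∈ Γ, f x = σ ∧ ∃ t : ℝ, 0 < t ∧ y = t • (x - fun _ => τ)}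

/-- The set of `k` such that some vector with the first `k` coordinates negative and
the remaining coordinates positive belongs to `C`; `κ_C` is its greatest element. -/
def kset {n : ℕ} (C : Set (Fin n → ℝ)) : Set ℕ :=
  {k : ℕ | ∃ α : Fin n → ℝ, (∀ i, 0 < α i) ∧
    (fun i : Fin n => if (i : ℕ) < k then -α i else α i) ∈ C}

lemma grad_ineq {n : ℕ} {Γ : Set (Fin n → ℝ)} {f : (Fin n → ℝ) → ℝ}
    (hconv : Convex ℝ Γ) (hconc : ConcaveOn ℝ Γ f)
    {x y : Fin n → ℝ} (hx : x ∈ Γ) (hy : y ∈ Γ)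
    (hd : DifferentiableAt ℝ f x) :
    f y ≤ f x + fderiv ℝ f x (y - x) := by
  set g : ℝ → ℝ := fun t => f (x + t • (y - x)) with hg
  have hline : ∀ t : ℝ, x + t • (y - x) = (1 - t) • x + t • y := by
    intro t; funext j; simp [Pi.add_apply, Pi.smul_apply]; ring
  have hder : HasDerivAt g (fderiv ℝ f x (y - x)) 0 := by
    have h1 : HasDerivAt (fun t : ℝ => x + t • (y - x)) (y - x) 0 := by
      simpa using ((hasDerivAt_id (0:ℝ)).smul_const (y - x)).const_add x
    have h2 : HasFDerivAt f (fderiv ℝ f x) (x + (0:ℝ) • (y - x)) := by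
      simpa using hd.hasFDerivAt
    exact h2.comp_hasDerivAt 0 h1
  have key : ∀ t ∈ Set.Ioc (0:ℝ) 1, f y - f x ≤ slope g 0 t := by
    intro t ht
    have hmem := hconc.2 hx hy (by linarith [ht.2] : (0:ℝ) ≤ 1 - t) ht.1.le (by ring)
    have hgt : (1 - t) * f x + t * f y ≤ g t := by
      simpa [hg, hline t, smul_eq_mul] using hmem
    have hg0 : g 0 = f x := by simp [hg]
    rw [slope_def_field, div_eq_inv_mul]
    rw [hg0, sub_zero]
    rw [le_inv_mul_iff₀ ht.1]
    nlinarith [hgt]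
  have htend : Tendsto (slope g 0) (𝓝[>] (0:ℝ)) (𝓝 (fderiv ℝ f x (y - x))) :=
    (hasDerivAt_iff_tendsto_slope.mp hder).mono_left
      (nhdsWithin_mono 0 (fun a ha => ne_of_gt ha))
  have hle : f y - f x ≤ fderiv ℝ f x (y - x) := by
    refine ge_of_tendsto htend ?_
    filter_upwards [Ioc_mem_nhdsGT_of_mem ⟨le_refl 0, one_pos⟩] with t ht
    exact key t ht
  linarith

theorem stmt9 {n : ℕ} (Γ : Set (Fin n → ℝ)) (f : (Fin n → ℝ) → ℝ)
    (hopen : IsOpen Γ) (hconv : Convex ℝ Γ)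
    (hcone : ∀ x ∈ Γ, ∀ t : ℝ, 0 < t → t • x ∈ Γ)
    (horth : {x : Fin n → ℝ | ∀ i, 0 < x i} ⊆ Γ)
    (hΓsym : ∀ (g : Equiv.Perm (Fin n)), ∀ x ∈ Γ, x ∘ g ∈ Γ)
    (hconc : ConcaveOn ℝ Γ f)
    (hdiff : ∀ x ∈ Γ, DifferentiableAt ℝ f x)
    (hlim : ∀ lam ∈ Γ, ∀ μ ∈ Γ, ∀ᶠ t : ℝ in atTop, f μ < f (t • lam)) :
    ∀ lam ∈ Γ, (∀ i : Fin n, 0 ≤ pd f lam i) ∧ 0 < ∑ i, pd f lam i := by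
  intro lam hlam
  set L := fderiv ℝ f lam with hL
  -- additions: sum of two elements of Γ lies in Γ
  have hadd : ∀ a ∈ Γ, ∀ b ∈ Γ, a + b ∈ Γ := by
    intro a ha b hb
    have hm : (1/2 : ℝ) • a + (1/2 : ℝ) • b ∈ Γ :=
      hconv ha hb (by norm_num) (by norm_num) (by norm_num)
    have := hcone _ hm 2 (by norm_num)
    have heq : (2:ℝ) • ((1/2 : ℝ) • a + (1/2 : ℝ) • b) = a + b := by
      funext j; simp [Pi.smul_apply]; ring
    rwa [heq] at this
  -- lam + t • e_i ∈ Γ for t > 0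
  have hmem : ∀ (t : ℝ), 0 < t → ∀ i : Fin n, lam + t • (Pi.single i 1 : Fin n → ℝ) ∈ Γ := by
    intro t ht i
    obtain ⟨ε, hε, hball⟩ := Metric.isOpen_iff.mp hopen lam hlam
    set δ := ε / 2 with hδ
    have hδpos : 0 < δ := by positivity
    have ha : lam - (fun _ => δ) ∈ Γ := by
      apply hball
      rw [Metric.mem_ball, dist_eq_norm]
      have : lam - (fun _ => δ) - lam = fun _ : Fin n => -δ := by
        funext j; simp
      rw [this]
      calc ‖fun _ : Fin n => -δ‖ ≤ δ := by
            apply pi_norm_le_iff_of_nonneg hδpos.le |>.mpr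
            intro j; simp [abs_of_pos hδpos]
        _ < ε := by linarith
    have hb : (fun j : Fin n => δ + t * ((Pi.single i 1 : Fin n → ℝ) j)) ∈ Γ := by
      apply horth
      intro j
      by_cases h : j = i <;> simp [h, Pi.single_apply] <;> positivity
    have heq : lam + t • (Pi.single i 1 : Fin n → ℝ)
        = (lam - fun _ => δ) + fun j : Fin n => δ + t * ((Pi.single i 1 : Fin n → ℝ) j) := by
      funext j; simp; ring
    rw [heq]
    exact hadd _ ha _ hb
  have hgi : ∀ y ∈ Γ, f y ≤ f lam + L (y - lam) := fun y hy =>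
    grad_ineq hconv hconc hlam hy (hdiff lam hlam)
  set c := L lam with hc
  -- nonnegativity
  have hnn : ∀ i : Fin n, 0 ≤ pd f lam i := by
    intro i
    by_contra hneg
    push_neg at hneg
    set fi := pd f lam i with hfi
    set t : ℝ := (|c| + 1) / (-fi) with ht
    have htpos : 0 < t := by
      apply div_pos (by positivity) (by linarith)
    have hk : c + t * fi < 0 := by
      have h1 : t * (-fi) = |c| + 1 := div_mul_cancel₀ _ (by linarith)
      have h2 : t * fi = -(|c| + 1) := by linarith [h1, (by ring : t * (-fi) = -(t * fi))]
      have habs := le_abs_self c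
      linarith
    set k := c + t * fi with hkdef
    set ν := lam + t • (Pi.single i 1 : Fin n → ℝ) with hν
    have hνΓ : ν ∈ Γ := hmem t htpos i
    have hLν : L ν = c + t * fi := by
      rw [hν, map_add, map_smul]
      simp [smul_eq_mul, hfi, pd, hL, hc]
    obtain ⟨a, ha⟩ := eventually_atTop.mp (hlim ν hνΓ lam hlam)
    set s : ℝ := max a (max 1 (c / k + 1)) with hs
    have hs1 : (1:ℝ) ≤ s := le_trans (le_max_left _ _) (le_max_right _ _)
    have hspos : (0:ℝ) < s := by linarith
    have hsa : a ≤ s := le_max_left _ _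
    have hsk : c / k + 1 ≤ s := le_trans (le_max_right _ _) (le_max_right _ _)
    have hsν : s • ν ∈ Γ := hcone ν hνΓ s hspos
    have h1 : f lam < f (s • ν) := ha s hsa
    have h2 : f (s • ν) ≤ f lam + L (s • ν - lam) := hgi _ hsν
    have h3 : L (s • ν - lam) = s * k - c := by
      rw [map_sub, map_smul, hLν]; simp [smul_eq_mul, hc, hkdef]
    have hsk2 : s * k < c := by
      have : c / k * k = c := div_mul_cancel₀ _ (ne_of_lt hk)
      nlinarith
    rw [h3] at h2
    linarith
  refine ⟨hnn, ?_⟩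
  by_contra hsum
  push_neg at hsum
  have hzero : ∀ i : Fin n, pd f lam i = 0 := by
    have heq : ∑ i, pd f lam i = 0 :=
      le_antisymm hsum (Finset.sum_nonneg fun i _ => hnn i)
    intro i
    exact (Finset.sum_eq_zero_iff_of_nonneg fun j _ => hnn j).mp heq i (Finset.mem_univ i)
  have hLlam : c = 0 := by
    have h := LinearMap.pi_apply_eq_sum_univ (L : (Fin n → ℝ) →ₗ[ℝ] ℝ) lam
    simp only [ContinuousLinearMap.coe_coe] at h
    rw [hc, h]
    apply Finset.sum_eq_zero
    intro i _
    have hpi : (fun j => if i = j then (1:ℝ) else 0) = (Pi.single i 1 : Fin n → ℝ) := by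
      funext j; simp [Pi.single_apply, eq_comm]
    rw [hpi]
    have hLe : L (Pi.single i 1 : Fin n → ℝ) = pd f lam i := rfl
    rw [hLe, hzero i, smul_zero]
  obtain ⟨a, ha⟩ := eventually_atTop.mp (hlim lam hlam lam hlam)
  set s : ℝ := max a 1 with hs
  have hspos : (0:ℝ) < s := lt_of_lt_of_le one_pos (le_max_right _ _)
  have h1 : f lam < f (s • lam) := ha s (le_max_left _ _)
  have h2 : f (s • lam) ≤ f lam + L (s • lam - lam) := hgi _ (hcone lam hlam s hspos)
  have h3 : L (s • lam - lam) = 0 := by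
    rw [map_sub, map_smul]; simp [smul_eq_mul, ← hc, hLlam]
  rw [h3] at h2
  linarith
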